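/- Let α be a real constant with α(α−3)(2α−3) ≠ 0, set m := (2α³−9α²+9α)^{1/3} (real cube root) and s := (3α²−9α+9)/m². Let u: I → ℝ be a smooth solution of the nonlinear ODE u‴ = α·(u″)²/u′ on an open interval I, with u′ > 0 and u″ ≠ 0 throughout I. Then x̄(x) := −(m/3)·ln u′(x) is strictly monotone on I, and the function v of x̄ defined by v(x̄(x)) = (u(x) − x·u′(x))·u′(x)^{α/3−1} is a smooth solution of the linear canonical equation v‴ = s·v′ + v (derivatives taken with respect to x̄). -/

import Mathlib

/-!
Invariants of the third-order ODE `u''' = f(x, u, u', u'')` under contact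
transformations, following Cartan's equivalence method.
We write `p = u'`, `q = u''`.
-/

noncomputable section

/-- The real cube root of a real number. -/
def cbrt (y : ℝ) : ℝ := if 0 ≤ y then y ^ ((1 : ℝ)/3) else -((-y) ^ ((1 : ℝ)/3))

/-- Functions of `(x, u, p, q)`. -/
abbrev Fn : Type := ℝ → ℝ → ℝ → ℝ → ℝ

/-- Functions of `(x, u, p)`. -/
abbrev Fn3 : Type := ℝ → ℝ → ℝ → ℝ

/-- Partial derivative in `x` of a function of `(x,u,p,q)`. -/
def pdx (g : Fn) : Fn := fun x u p q => deriv (fun t => g t u p q) x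
/-- Partial derivative in `u` of a function of `(x,u,p,q)`. -/
def pdu (g : Fn) : Fn := fun x u p q => deriv (fun t => g x t p q) u
/-- Partial derivative in `p` of a function of `(x,u,p,q)`. -/
def pdp (g : Fn) : Fn := fun x u p q => deriv (fun t => g x u t q) p
/-- Partial derivative in `q` of a function of `(x,u,p,q)`. -/
def pdq (g : Fn) : Fn := fun x u p q => deriv (fun t => g x u p t) q

/-- Partial derivative in `x` of a function of `(x,u,p)`. -/
def pdx3 (g : Fn3) : Fn3 := fun x u p => deriv (fun t => g t u p) x
/-- Partial derivative in `u` of a function of `(x,u,p)`. -/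
def pdu3 (g : Fn3) : Fn3 := fun x u p => deriv (fun t => g x t p) u
/-- Partial derivative in `p` of a function of `(x,u,p)`. -/
def pdp3 (g : Fn3) : Fn3 := fun x u p => deriv (fun t => g x u t) p

/-- Lift of a function of `(x,u,p)` to a function of `(x,u,p,q)`, constant in `q`. -/
def lift (g : Fn3) : Fn := fun x u p _ => g x u p

/-- The total derivative operator `D̂ₓ = ∂ₓ + p ∂ᵤ + q ∂ₚ + f ∂_q` of the ODE `u''' = f`. -/
def Dhat (f g : Fn) : Fn := fun x u p q =>
  pdx g x u p q + p * pdu g x u p q + q * pdp g x u p q + f x u p q * pdq g x u p q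

/-- `I₁ = −f_q`. -/
def I1 (f : Fn) : Fn := fun x u p q => -(pdq f x u p q)

/-- `I₂ = −(2/9)I₁² − f_p − (1/3)D̂ₓI₁`. -/
def I2 (f : Fn) : Fn := fun x u p q =>
  -(2/9) * (I1 f x u p q)^2 - pdp f x u p q - (1/3) * Dhat f (I1 f) x u p q

/-- `I₃ = −(1/3)I₁I₂ − f_u − (1/2)D̂ₓI₂`. -/
def I3 (f : Fn) : Fn := fun x u p q =>
  -(1/3) * I1 f x u p q * I2 f x u p q - pdu f x u p q - (1/2) * Dhat f (I2 f) x u p q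

/-- `J₃`, the real cube root of `I₃`. -/
def J3 (f : Fn) : Fn := fun x u p q => cbrt (I3 f x u p q)

/-- `I₄ = (J₃)_q`. -/
def I4 (f : Fn) : Fn := pdq (J3 f)

/-- `I₅ = (1/(3J₃²))(I₁J₃ + 3D̂ₓJ₃)`. -/
def I5 (f : Fn) : Fn := fun x u p q =>
  (1 / (3 * (J3 f x u p q)^2)) * (I1 f x u p q * J3 f x u p q + 3 * Dhat f (J3 f) x u p q)

/-- `I₇ = −(I₅)_q J₃²`. -/
def I7 (f : Fn) : Fn := fun x u p q => -(pdq (I5 f) x u p q) * (J3 f x u p q)^2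

/-- `I₉ = 2J₃D̂ₓI₅ − I₂ + J₃²I₅²`. -/
def I9 (f : Fn) : Fn := fun x u p q =>
  2 * J3 f x u p q * Dhat f (I5 f) x u p q - I2 f x u p q
    + (J3 f x u p q)^2 * (I5 f x u p q)^2

/-- `K = I₉/J₃²`. -/
def Kinv (f : Fn) : Fn := fun x u p q => I9 f x u p q / (J3 f x u p q)^2

/-- `Q = −(I₁I₇ + 3J₃²(I₅)_p + 3(J₃)_u − 3J₃I₄D̂ₓI₅)/(3J₃)`. -/
def Qinv (f : Fn) : Fn := fun x u p q =>
  -(I1 f x u p q * I7 f x u p q + 3 * (J3 f x u p q)^2 * pdp (I5 f) x u p q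
      + 3 * pdu (J3 f) x u p q
      - 3 * J3 f x u p q * I4 f x u p q * Dhat f (I5 f) x u p q)
    / (3 * J3 f x u p q)

/-- `I₆ = (2/3)(J₃)_q I₁ − (1/3)(I₁)_q J₃ − 2(J₃)_p + 2J₃I₄I₅`. -/
def I6 (f : Fn) : Fn := fun x u p q =>
  (2/3) * pdq (J3 f) x u p q * I1 f x u p q - (1/3) * pdq (I1 f) x u p q * J3 f x u p q
    - 2 * pdp (J3 f) x u p q + 2 * J3 f x u p q * I4 f x u p q * I5 f x u p q

/-- `I₈ = (I₄)_q`. -/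
def I8 (f : Fn) : Fn := pdq (I4 f)

/-- `I₁₀ = I₄D̂ₓI₇ − J₃(I₇)_p + J₃²(I₄/J₃)_u`. -/
def I10 (f : Fn) : Fn := fun x u p q =>
  I4 f x u p q * Dhat f (I7 f) x u p q - J3 f x u p q * pdp (I7 f) x u p q
    + (J3 f x u p q)^2 *
      pdu (fun x' u' p' q' => I4 f x' u' p' q' / J3 f x' u' p' q') x u p q

/-- `I₁₁ = (J₃)_u − D̂ₓI₇`. -/
def I11 (f : Fn) : Fn := fun x u p q =>
  pdu (J3 f) x u p q - Dhat f (I7 f) x u p q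

/-- `I₁₂`. -/
def I12 (f : Fn) : Fn := fun x u p q =>
  6 * I1 f x u p q * J3 f x u p q *
      (I5 f x u p q * I7 f x u p q - I4 f x u p q * Dhat f (I5 f) x u p q)
    - 18 * (J3 f x u p q)^3 * I4 f x u p q
    + 6 * pdp (I5 f) x u p q * I1 f x u p q * (J3 f x u p q)^2
    - 18 * I2 f x u p q * J3 f x u p q * I4 f x u p q * I5 f x u p q
    - 18 * J3 f x u p q * I7 f x u p q * Dhat f (I5 f) x u p q
    + 18 * (J3 f x u p q)^2 * pdu (I5 f) x u p q
    + 18 * I2 f x u p q * Dhat f (I4 f) x u p q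
    + 2 * (I1 f x u p q)^2 * I7 f x u p q
    - 9 * pdp (I2 f) x u p q * J3 f x u p q
    + 6 * (J3 f x u p q)^2 *
        pdu (fun x' u' p' q' => I1 f x' u' p' q' / J3 f x' u' p' q') x u p q
    + 36 * I2 f x u p q * I7 f x u p q

/-- `I₁₃ = (J₃I₄I₅ − I₇)D̂ₓK + J₃K_u − J₃²I₅K_p`. -/
def I13 (f : Fn) : Fn := fun x u p q =>
  (J3 f x u p q * I4 f x u p q * I5 f x u p q - I7 f x u p q) * Dhat f (Kinv f) x u p q
    + J3 f x u p q * pdu (Kinv f) x u p q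
    - (J3 f x u p q)^2 * I5 f x u p q * pdp (Kinv f) x u p q

/-- `I₁₄ = K_q`. -/
def I14 (f : Fn) : Fn := pdq (Kinv f)

/-- `I₁₅ = I₄D̂ₓK − J₃K_p`. -/
def I15 (f : Fn) : Fn := fun x u p q =>
  I4 f x u p q * Dhat f (Kinv f) x u p q - J3 f x u p q * pdp (Kinv f) x u p q

/-- The Jacobian determinant of the map `(x,u,p) ↦ (φ, ψ, χ)`. -/
def jac3 (φ ψ χ : Fn3) : Fn3 := fun x u p =>
  Matrix.det !![pdx3 φ x u p, pdu3 φ x u p, pdp3 φ x u p;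
                pdx3 ψ x u p, pdu3 ψ x u p, pdp3 ψ x u p;
                pdx3 χ x u p, pdu3 χ x u p, pdp3 χ x u p]

/-- A contact transformation `(x̄,ū,p̄) = (φ(x,u,p), ψ(x,u,p), χ(x,u,p))` on an open set
`U ⊆ ℝ³`: a smooth map with nowhere-vanishing Jacobian determinant, together with a
nowhere-vanishing contact multiplier `lam` such that `dψ − χ dφ = lam (du − p dx)`. -/
structure IsContactTransformOn (U : Set (ℝ × ℝ × ℝ)) (φ ψ χ lam : Fn3) : Prop where
  isOpen : IsOpen U
  smooth : ContDiffOn ℝ (⊤ : ℕ∞) (fun v : ℝ × ℝ × ℝ =>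
      (φ v.1 v.2.1 v.2.2, ψ v.1 v.2.1 v.2.2, χ v.1 v.2.1 v.2.2)) U
  jac_ne : ∀ x u p, (x, u, p) ∈ U → jac3 φ ψ χ x u p ≠ 0
  lam_ne : ∀ x u p, (x, u, p) ∈ U → lam x u p ≠ 0
  contact_p : ∀ x u p, (x, u, p) ∈ U → pdp3 ψ x u p - χ x u p * pdp3 φ x u p = 0
  contact_u : ∀ x u p, (x, u, p) ∈ U → pdu3 ψ x u p - χ x u p * pdu3 φ x u p = lam x u p
  contact_x : ∀ x u p, (x, u, p) ∈ U → pdx3 ψ x u p - χ x u p * pdx3 φ x u p = -p * lam x u p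

/-- `u` is a smooth solution of the third-order ODE `u''' = f(x,u,u',u'')` on `I`. -/
def SolvesODE3 (f : Fn) (I : Set ℝ) (u : ℝ → ℝ) : Prop :=
  ContDiffOn ℝ (⊤ : ℕ∞) u I ∧
  ∀ x ∈ I, deriv (deriv (deriv u)) x = f x (u x) (deriv u x) (deriv (deriv u) x)

/-- The ODE `u''' = f(x,u,u',u'')` is equivalent to `ū''' = f̄(x̄,ū,ū',ū'')` under the
contact transformation `(φ, ψ, χ)` on `U`: for every smooth solution `u` of the first
equation, defined on an open interval, whose prolonged graph `(x, u(x), u'(x))` lies in `U`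
and for which `x̄(x) := φ(x,u(x),u'(x))` has nonvanishing derivative, the function `v` of
`x̄` defined by `v(x̄(x)) = ψ(x,u(x),u'(x))` is a smooth solution of the second equation
and satisfies `dv/dx̄ = χ(x,u(x),u'(x))`. -/
def ContactEquivOn (f fbar : Fn) (U : Set (ℝ × ℝ × ℝ)) (φ ψ χ : Fn3) : Prop :=
  ∀ (I : Set ℝ) (u : ℝ → ℝ), IsOpen I → I.OrdConnected →
    SolvesODE3 f I u →
    (∀ x ∈ I, (x, u x, deriv u x) ∈ U) →
    (∀ x ∈ I, deriv (fun t => φ t (u t) (deriv u t)) x ≠ 0) →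
    ∃ v : ℝ → ℝ,
      ContDiffOn ℝ (⊤ : ℕ∞) v ((fun t => φ t (u t) (deriv u t)) '' I) ∧
      (∀ x ∈ I, v (φ x (u x) (deriv u x)) = ψ x (u x) (deriv u x)) ∧
      (∀ x ∈ I, deriv v (φ x (u x) (deriv u x)) = χ x (u x) (deriv u x)) ∧
      (∀ y ∈ (fun t => φ t (u t) (deriv u t)) '' I,
        deriv (deriv (deriv v)) y = fbar y (v y) (deriv v y) (deriv (deriv v) y))

/-
From `(u'' u'^(-α))' = 0` one gets `u'' = C u'^α`. Taking `p = u'` as parameter, `x` and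
`u - x p` are found by two quadratures in `p`: `u - x p = a + b p + F(p)` with
`F'' = -p^(-α)/C`. Since `p = exp(-3x̄/m)`, the product `(u - x p) p^(α/3-1)` becomes an
exponential polynomial in `x̄` whose exponents `(3-α)/m`, `-α/m`, `(2α-3)/m` are the roots of
`k³ - s k - 1`; for `α = 1, 2` two of them coincide and the `F`-term carries a factor `x̄`.
-/

open Real

theorem cbrt_pow_three (y : ℝ) : cbrt y ^ 3 = y := by
  unfold cbrt
  split_ifs with h
  · rw [← rpow_natCast, ← rpow_mul h]; norm_num
  · rw [Odd.neg_pow (by decide), ← rpow_natCast, ← rpow_mul (by linarith)]; norm_num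

theorem exists_eq_const_of_hasDerivAt_zero {I : Set ℝ} (hI : IsOpen I) (hIc : IsPreconnected I)
    {f : ℝ → ℝ} (hf : ∀ x ∈ I, HasDerivAt f 0 x) : ∃ c, ∀ x ∈ I, f x = c :=
  hI.exists_is_const_of_deriv_eq_zero hIc
    (fun x hx => (hf x hx).differentiableAt.differentiableWithinAt) (fun x hx => (hf x hx).deriv)

theorem strictMonoOn_or_strictAntiOn_of_hasDerivAt_ne_zero {I : Set ℝ} (hIc : Convex ℝ I)
    {f f' : ℝ → ℝ} (hf : ∀ x ∈ I, HasDerivAt f (f' x) x) (hf' : ∀ x ∈ I, f' x ≠ 0) :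
    StrictMonoOn f I ∨ StrictAntiOn f I := by
  have hfc : ContinuousOn f I := fun x hx => (hf x hx).continuousAt.continuousWithinAt
  have hderiv : ∀ x ∈ interior I, deriv f x = f' x :=
    fun x hx => (hf x (interior_subset hx)).deriv
  rcases hasDerivWithinAt_forall_lt_or_forall_gt_of_forall_ne hIc
    (fun x hx => (hf x hx).hasDerivWithinAt) hf' with hneg | hpos
  · exact Or.inr <| strictAntiOn_of_deriv_neg hIc hfc
      fun x hx => hderiv x hx ▸ hneg x (interior_subset hx)
  · exact Or.inl <| strictMonoOn_of_deriv_pos hIc hfc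
      fun x hx => hderiv x hx ▸ hpos x (interior_subset hx)

theorem SolvesODE3.hasDerivAt {f : Fn} {I : Set ℝ} {u : ℝ → ℝ} (hu : SolvesODE3 f I u)
    (hI : IsOpen I) :
    (∀ x ∈ I, HasDerivAt u (deriv u x) x) ∧
      (∀ x ∈ I, HasDerivAt (deriv u) (deriv (deriv u) x) x) ∧
      ∀ x ∈ I, HasDerivAt (deriv (deriv u)) (f x (u x) (deriv u x) (deriv (deriv u) x)) x := by
  have hderiv {g : ℝ → ℝ} (hg : ContDiffOn ℝ (⊤ : ℕ∞) g I) :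
      ∀ x ∈ I, HasDerivAt g (deriv g x) x := fun x hx =>
    ((hg.differentiableOn (by simp)).differentiableAt (hI.mem_nhds hx)).hasDerivAt
  have hp : ContDiffOn ℝ (⊤ : ℕ∞) (deriv u) I := hu.1.deriv_of_isOpen hI (by simp)
  have hq : ContDiffOn ℝ (⊤ : ℕ∞) (deriv (deriv u)) I := hp.deriv_of_isOpen hI (by simp)
  exact ⟨hderiv hu.1, hderiv hp, fun x hx => hu.2 x hx ▸ hderiv hq x hx⟩

def SolvesCanonical (s : ℝ) (v : ℝ → ℝ) : Prop :=
  ContDiff ℝ (⊤ : ℕ∞) v ∧ ∀ y, deriv (deriv (deriv v)) y = s * deriv v y + v y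

namespace SolvesCanonical

variable {s : ℝ} {f g : ℝ → ℝ}

theorem add (hf : SolvesCanonical s f) (hg : SolvesCanonical s g) :
    SolvesCanonical s (f + g) := by
  refine ⟨hf.1.add hg.1, fun y => ?_⟩
  have h (n : ℕ) : deriv^[n] (f + g) y = deriv^[n] f y + deriv^[n] g y := by
    simpa only [iteratedDeriv_eq_iterate] using
      iteratedDeriv_add (hf.1.of_le (WithTop.coe_le_coe.2 le_top)).contDiffAt
        (hg.1.of_le (WithTop.coe_le_coe.2 le_top)).contDiffAt
  have h1 := h 1
  have h3 := h 3
  simp only [Function.iterate_succ, Function.iterate_zero, Function.comp_apply, id] at h1 h3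
  rw [h1, h3, hf.2, hg.2, Pi.add_apply]
  ring

theorem const_mul (c : ℝ) (hf : SolvesCanonical s f) :
    SolvesCanonical s (fun y => c * f y) := by
  refine ⟨contDiff_const.mul hf.1, fun y => ?_⟩
  have h (n : ℕ) : deriv^[n] (fun y => c * f y) y = c * deriv^[n] f y := by
    simpa only [iteratedDeriv_eq_iterate] using iteratedDeriv_const_mul_field c f (x := y)
  have h1 := h 1
  have h3 := h 3
  simp only [Function.iterate_succ, Function.iterate_zero, Function.comp_apply, id] at h1 h3
  rw [h1, h3, hf.2]
  ring

end SolvesCanonical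

def expBlock (A B k y : ℝ) : ℝ := (A + B * y) * exp (k * y)

theorem hasDerivAt_expBlock (A B k y : ℝ) :
    HasDerivAt (expBlock A B k) (expBlock (A * k + B) (B * k) k y) y := by
  have h := (((hasDerivAt_id' y).const_mul B).const_add A).mul
    ((hasDerivAt_id' y).const_mul k).exp
  exact h.congr_deriv (by simp only [expBlock]; ring)

theorem deriv_expBlock (A B k : ℝ) :
    deriv (expBlock A B k) = expBlock (A * k + B) (B * k) k :=
  funext fun y => (hasDerivAt_expBlock A B k y).deriv

theorem contDiff_expBlock (A B k : ℝ) : ContDiff ℝ (⊤ : ℕ∞) (expBlock A B k) := by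
  unfold expBlock
  fun_prop

/-- `3 k² - s` is the derivative of the characteristic polynomial `k³ - s k - 1`. -/
theorem solvesCanonical_expBlock {s A B k : ℝ} (hk : k ^ 3 = s * k + 1)
    (hB : B * (3 * k ^ 2 - s) = 0) : SolvesCanonical s (expBlock A B k) := by
  refine ⟨contDiff_expBlock A B k, fun y => ?_⟩
  simp only [deriv_expBlock, expBlock]
  linear_combination exp (k * y) * ((A + B * y) * hk + hB)

theorem div_pow_three_eq_of_cubic {α m s t : ℝ} (hm : m ≠ 0)
    (hm3 : m ^ 3 = 2 * α ^ 3 - 9 * α ^ 2 + 9 * α) (hs : s = (3 * α ^ 2 - 9 * α + 9) / m ^ 2)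
    (ht : t ^ 3 = (3 * α ^ 2 - 9 * α + 9) * t + (2 * α ^ 3 - 9 * α ^ 2 + 9 * α)) :
    (t / m) ^ 3 = s * (t / m) + 1 := by
  rw [hs]
  field_simp
  linear_combination ht - hm3

theorem exists_eq_mul_rpow_of_hasDerivAt {I : Set ℝ} (hI : IsOpen I) (hIc : IsPreconnected I)
    {α : ℝ} {p q : ℝ → ℝ} (hp : ∀ x ∈ I, 0 < p x) (hq : ∀ x ∈ I, q x ≠ 0)
    (hpd : ∀ x ∈ I, HasDerivAt p (q x) x)
    (hqd : ∀ x ∈ I, HasDerivAt q (α * q x ^ 2 / p x) x) :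
    ∃ C ≠ 0, ∀ x ∈ I, q x = C * p x ^ α := by
  have hconst : ∀ x ∈ I, HasDerivAt (fun x => q x * p x ^ (-α)) 0 x := by
    intro x hx
    refine ((hqd x hx).mul ((hpd x hx).rpow_const (Or.inl (hp x hx).ne'))).congr_deriv ?_
    rw [rpow_sub (hp x hx), rpow_one]
    field_simp
    ring
  obtain ⟨C, hC⟩ := exists_eq_const_of_hasDerivAt_zero hI hIc hconst
  have hqC : ∀ x ∈ I, q x = C * p x ^ α := fun x hx => by
    rw [← hC x hx, mul_assoc, ← rpow_add (hp x hx), neg_add_cancel, rpow_zero, mul_one]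
  rcases I.eq_empty_or_nonempty with rfl | ⟨x₀, hx₀⟩
  · exact ⟨1, one_ne_zero, by simp⟩
  · refine ⟨C, fun hC0 => hq x₀ hx₀ ?_, hqC⟩
    rw [hqC x₀ hx₀, hC0, zero_mul]

/-- `G = F ∘ exp` and `X = F' ∘ exp` for a second antiderivative `F` of `p ↦ p ^ (-α)`, so the
conclusion reads `u - x p = a + b p - F(p) / C`. -/
theorem exists_legendre_eq {I : Set ℝ} (hI : IsOpen I) (hIc : IsPreconnected I)
    {α C : ℝ} (hC : C ≠ 0) {u p q G X : ℝ → ℝ}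
    (hud : ∀ x ∈ I, HasDerivAt u (p x) x) (hpd : ∀ x ∈ I, HasDerivAt p (q x) x)
    (hp : ∀ x ∈ I, 0 < p x) (hqC : ∀ x ∈ I, q x = C * p x ^ α)
    (hG : ∀ z, HasDerivAt G (X z * exp z) z) (hX : ∀ z, HasDerivAt X (exp ((1 - α) * z)) z) :
    ∃ a b, ∀ x ∈ I, u x - x * p x = a + b * p x - G (log (p x)) / C := by
  have hlog : ∀ x ∈ I, HasDerivAt (fun x => log (p x)) (q x / p x) x :=
    fun x hx => (hpd x hx).log (hp x hx).ne'
  have hXq : ∀ x ∈ I, exp ((1 - α) * log (p x)) * (q x / p x) = C := by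
    intro x hx
    have e : (1 - α) * log (p x) + log (p x) * α = log (p x) := by ring
    rw [hqC x hx, rpow_def_of_pos (hp x hx), mul_div_assoc', mul_left_comm, ← exp_add, e,
      exp_log (hp x hx), mul_div_assoc, div_self (hp x hx).ne', mul_one]
  obtain ⟨b, hb⟩ : ∃ b, ∀ x ∈ I, x - X (log (p x)) / C = b := by
    refine exists_eq_const_of_hasDerivAt_zero hI hIc fun x hx => ?_
    refine ((hasDerivAt_id' x).sub (((hX _).comp x (hlog x hx)).div_const C)).congr_deriv ?_
    rw [hXq x hx, div_self hC, sub_self]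
  obtain ⟨a, ha⟩ : ∃ a, ∀ x ∈ I, u x - x * p x + b * p x + G (log (p x)) / C = a := by
    refine exists_eq_const_of_hasDerivAt_zero hI hIc fun x hx => ?_
    refine ((((hud x hx).sub ((hasDerivAt_id' x).mul (hpd x hx))).add
      ((hpd x hx).const_mul b)).add (((hG _).comp x (hlog x hx)).div_const C)).congr_deriv ?_
    have hx' : X (log (p x)) = C * (x - b) := by rw [← hb x hx]; field_simp; ring
    have hpx := (hp x hx).ne'
    rw [exp_log (hp x hx)]
    field_simp
    linear_combination q x * hx'
  exact ⟨a, -b, fun x hx => by linarith [ha x hx]⟩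

theorem exists_particular_solution {α m s : ℝ} (hm : m ≠ 0)
    (hm3 : m ^ 3 = 2 * α ^ 3 - 9 * α ^ 2 + 9 * α) (hs : s = (3 * α ^ 2 - 9 * α + 9) / m ^ 2) :
    ∃ G X : ℝ → ℝ, (∀ z, HasDerivAt G (X z * exp z) z) ∧
      (∀ z, HasDerivAt X (exp ((1 - α) * z)) z) ∧
      SolvesCanonical s (fun y => G (-(3 / m) * y) * exp ((3 - α) / m * y)) := by
  have hroot (t : ℝ)
      (ht : t ^ 3 = (3 * α ^ 2 - 9 * α + 9) * t + (2 * α ^ 3 - 9 * α ^ 2 + 9 * α)) :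
      (t / m) ^ 3 = s * (t / m) + 1 := div_pow_three_eq_of_cubic hm hm3 hs ht
  by_cases h1 : α = 1
  · subst h1
    refine ⟨fun z => z * exp z, fun z => z + 1, fun z => ?_, fun z => ?_, ?_⟩
    · exact ((hasDerivAt_id' z).mul (hasDerivAt_exp z)).congr_deriv (by ring)
    · simpa using (hasDerivAt_id' z).add_const 1
    · convert solvesCanonical_expBlock (A := 0) (B := -(3 / m)) (hroot (-1) (by ring)) ?_ using 1
      · funext y
        simp only [expBlock]
        rw [mul_assoc, ← exp_add]
        ring_nf
      · rw [hs]; field_simp; ring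
  by_cases h2 : α = 2
  · subst h2
    refine ⟨fun z => -z, fun z => -exp (-z), fun z => ?_, fun z => ?_, ?_⟩
    · exact (hasDerivAt_neg z).congr_deriv (by simp [← exp_add])
    · exact (hasDerivAt_neg z).exp.neg.congr_deriv (by ring_nf)
    · convert solvesCanonical_expBlock (A := 0) (B := 3 / m) (hroot 1 (by ring)) ?_ using 1
      · funext y
        simp only [expBlock]
        ring_nf
      · rw [hs]; field_simp; ring
  have h1' : 1 - α ≠ 0 := sub_ne_zero.2 (Ne.symm h1)
  have h2' : 2 - α ≠ 0 := sub_ne_zero.2 (Ne.symm h2)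
  refine ⟨fun z => exp ((2 - α) * z) / ((1 - α) * (2 - α)), fun z => exp ((1 - α) * z) / (1 - α),
    fun z => ?_, fun z => ?_, ?_⟩
  · refine (((hasDerivAt_id' z).const_mul (2 - α)).exp.div_const _).congr_deriv ?_
    rw [div_mul_eq_mul_div, ← exp_add]
    field_simp
    ring_nf
  · refine (((hasDerivAt_id' z).const_mul (1 - α)).exp.div_const _).congr_deriv ?_
    field_simp
  · convert solvesCanonical_expBlock (A := 1 / ((1 - α) * (2 - α))) (B := 0)
      (hroot (2 * α - 3) (by ring)) (by ring) using 1
    funext y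
    simp only [expBlock]
    rw [div_mul_eq_mul_div, ← exp_add]
    field_simp
    ring_nf

theorem exists_solvesCanonical_legendre {α m s : ℝ} (hm : m ≠ 0)
    (hm3 : m ^ 3 = 2 * α ^ 3 - 9 * α ^ 2 + 9 * α) (hs : s = (3 * α ^ 2 - 9 * α + 9) / m ^ 2)
    {G : ℝ → ℝ} (hG : SolvesCanonical s (fun y => G (-(3 / m) * y) * exp ((3 - α) / m * y)))
    (a b C : ℝ) :
    ∃ v, SolvesCanonical s v ∧
      ∀ P, 0 < P → v (-(m / 3) * log P) = (a + b * P - G (log P) / C) * P ^ (α / 3 - 1) := by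
  have hk₁ := div_pow_three_eq_of_cubic (t := 3 - α) hm hm3 hs (by ring)
  have hk₂ := div_pow_three_eq_of_cubic (t := -α) hm hm3 hs (by ring)
  refine ⟨_, ((solvesCanonical_expBlock (A := a) hk₁ (zero_mul _)).add
    (solvesCanonical_expBlock (A := b) hk₂ (zero_mul _))).add (hG.const_mul (-1 / C)),
    fun P hP => ?_⟩
  have e₁ : (3 - α) / m * (-(m / 3) * log P) = log P * (α / 3 - 1) := by field_simp; ring
  have e₂ : -α / m * (-(m / 3) * log P) = log P + log P * (α / 3 - 1) := by field_simp; ring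
  have e₃ : -(3 / m) * (-(m / 3) * log P) = log P := by field_simp
  simp only [Pi.add_apply, expBlock, zero_mul, add_zero, e₁, e₂, e₃]
  rw [rpow_def_of_pos hP, exp_add, exp_log hP]
  ring

/-- Let `α(α−3)(2α−3) ≠ 0`, `m` the real cube root of `2α³−9α²+9α`,
`s = (3α²−9α+9)/m²`.  If `u` is a smooth solution of `u''' = α(u'')²/u'` on an open
interval `I` with `u' > 0` and `u'' ≠ 0` on `I`, then `x̄(x) := −(m/3)ln u'(x)` is
strictly monotone on `I` and the function `v` of `x̄` defined by
`v(x̄(x)) = (u − x·u')·(u')^{α/3−1}` is a smooth solution of `v''' = s·v' + v`. -/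
theorem example1_linearizes (α m s : ℝ)
    (hα : α * (α - 3) * (2*α - 3) ≠ 0)
    (hm : m = cbrt (2*α^3 - 9*α^2 + 9*α))
    (hs : s = (3*α^2 - 9*α + 9) / m^2)
    (I : Set ℝ) (hIopen : IsOpen I) (hIconn : I.OrdConnected)
    (u : ℝ → ℝ)
    (hu : SolvesODE3 (fun _ _ p q => α * q^2 / p) I u)
    (hp : ∀ x ∈ I, 0 < deriv u x)
    (hq : ∀ x ∈ I, deriv (deriv u) x ≠ 0)
    (xbar : ℝ → ℝ) (hxbar : xbar = fun x => -(m/3) * Real.log (deriv u x)) :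
    (StrictMonoOn xbar I ∨ StrictAntiOn xbar I) ∧
    ∃ v : ℝ → ℝ,
      ContDiffOn ℝ (⊤ : ℕ∞) v (xbar '' I) ∧
      (∀ x ∈ I, v (xbar x) = (u x - x * deriv u x) * (deriv u x) ^ (α/3 - 1)) ∧
      (∀ y ∈ xbar '' I,
        deriv (deriv (deriv v)) y = s * deriv v y + v y) := by
  have hm3 : m ^ 3 = 2 * α ^ 3 - 9 * α ^ 2 + 9 * α := hm ▸ cbrt_pow_three _
  have hm0 : m ≠ 0 := by
    rintro rfl
    exact hα (by linear_combination -hm3)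
  obtain ⟨hud, hpd, hqd⟩ := hu.hasDerivAt hIopen
  have hxd : ∀ x ∈ I, HasDerivAt xbar (-(m / 3) * (deriv (deriv u) x / deriv u x)) x :=
    fun x hx => hxbar ▸ ((hpd x hx).log (hp x hx).ne').const_mul (-(m / 3))
  refine ⟨strictMonoOn_or_strictAntiOn_of_hasDerivAt_ne_zero hIconn.convex hxd fun x hx =>
    mul_ne_zero (by simpa using hm0) (div_ne_zero (hq x hx) (hp x hx).ne'), ?_⟩
  obtain ⟨C, hC, hqC⟩ :=
    exists_eq_mul_rpow_of_hasDerivAt hIopen hIconn.isPreconnected hp hq hpd hqd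
  obtain ⟨G, X, hG, hX, hE⟩ := exists_particular_solution hm0 hm3 hs
  obtain ⟨a, b, hab⟩ := exists_legendre_eq hIopen hIconn.isPreconnected hC hud hpd hp hqC hG hX
  obtain ⟨v, hv, hvP⟩ := exists_solvesCanonical_legendre hm0 hm3 hs hE a b C
  refine ⟨v, hv.1.contDiffOn, fun x hx => ?_, fun y _ => hv.2 y⟩
  rw [hxbar, hvP _ (hp x hx), hab x hx]

end
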